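/- arXiv:1304.4672 — 5 statements merged into one kernel-verified Lean document; each statement's English description precedes it below -/
import Mathlib

section
/- Let U₁ ⊂ R^{n₁} and U₂ ⊂ R^{n₂} be subspaces of dimensions d₁ and d₂. Let S' be the span of all outer products u⊗w with u ∈ U₁, w ∈ U₂ (viewed as vectors in R^{n₁n₂} via vectorization). Then μ(S') ≤ μ(U₁)·μ(U₂). -/
noncomputable def coh {ι : Type*} [Fintype ι] [DecidableEq ι]
    (U : Submodule ℝ (EuclideanSpace ℝ ι)) : ℝ :=
  ((Fintype.card ι : ℝ) / (Module.finrank ℝ U : ℝ)) *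
    ⨆ j : ι, ‖(U.orthogonalProjectionOnto (EuclideanSpace.single j 1) : EuclideanSpace ℝ ι)‖ ^ 2

/-!
The orthogonal projection onto `S' = U₁ ⊗ U₂` is `P_{U₁} ⊗ P_{U₂}`: on pure tensors,
`a ⊗ b - P a ⊗ P b` is orthogonal to every `u ⊗ w` with `u ∈ U₁, w ∈ U₂`, because
`⟪a ⊗ b, u ⊗ w⟫ = ⟪a, u⟫ ⟪b, w⟫ = ⟪P a, u⟫ ⟪P b, w⟫`. Since `e_{(i,j)} = e_i ⊗ e_j`, the leverage
scores of `S'` are the products of those of `U₁` and `U₂`, so their maximum is at most the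
product of the maxima, while the normalising factor `n₁ n₂ / (d₁ d₂)` splits as a product.
-/

open EuclideanSpace

section OuterProduct

variable {ι κ : Type*}

noncomputable def outerProd (a : EuclideanSpace ℝ ι) (b : EuclideanSpace ℝ κ) :
    EuclideanSpace ℝ (ι × κ) :=
  WithLp.toLp 2 fun p => a p.1 * b p.2

lemma outerProd_single_one [DecidableEq ι] [DecidableEq κ] (i : ι) (j : κ) :
    outerProd (single i 1) (single j 1) = single (i, j) (1 : ℝ) := by
  ext ⟨i', j'⟩
  simp only [outerProd, PiLp.toLp_apply, PiLp.single_apply, Prod.mk.injEq, ite_and]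
  split_ifs <;> simp

def outerSpan (U₁ : Submodule ℝ (EuclideanSpace ℝ ι)) (U₂ : Submodule ℝ (EuclideanSpace ℝ κ)) :
    Submodule ℝ (EuclideanSpace ℝ (ι × κ)) :=
  Submodule.span ℝ {z | ∃ u ∈ U₁, ∃ w ∈ U₂, z = outerProd u w}

variable [Fintype ι] [Fintype κ]

lemma inner_outerProd (a c : EuclideanSpace ℝ ι) (b d : EuclideanSpace ℝ κ) :
    inner ℝ (outerProd a b) (outerProd c d) = inner ℝ a c * inner ℝ b d := by
  simp only [PiLp.inner_apply, RCLike.inner_apply, conj_trivial, outerProd]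
  rw [Fintype.sum_prod_type, Finset.sum_mul_sum]
  exact Finset.sum_congr rfl fun i _ => Finset.sum_congr rfl fun j _ => by ring

lemma norm_outerProd_sq (a : EuclideanSpace ℝ ι) (b : EuclideanSpace ℝ κ) :
    ‖outerProd a b‖ ^ 2 = ‖a‖ ^ 2 * ‖b‖ ^ 2 := by
  simp only [← real_inner_self_eq_norm_sq, inner_outerProd]

lemma starProjection_outerSpan_outerProd (U₁ : Submodule ℝ (EuclideanSpace ℝ ι))
    (U₂ : Submodule ℝ (EuclideanSpace ℝ κ)) (a : EuclideanSpace ℝ ι) (b : EuclideanSpace ℝ κ) :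
    (outerSpan U₁ U₂).starProjection (outerProd a b) =
      outerProd (U₁.starProjection a) (U₂.starProjection b) := by
  apply Submodule.eq_starProjection_of_mem_of_inner_eq_zero
  · exact Submodule.subset_span ⟨_, U₁.starProjection_apply_mem a,
      _, U₂.starProjection_apply_mem b, rfl⟩
  · intro z hz
    induction hz using Submodule.span_induction with
    | mem z hz =>
      obtain ⟨u, hu, w, hw, rfl⟩ := hz
      have hau : inner ℝ a u = inner ℝ (U₁.starProjection a) u := by
        rw [← sub_eq_zero, ← inner_sub_left, U₁.starProjection_inner_eq_zero a u hu]
      have hbw : inner ℝ b w = inner ℝ (U₂.starProjection b) w := by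
        rw [← sub_eq_zero, ← inner_sub_left, U₂.starProjection_inner_eq_zero b w hw]
      rw [inner_sub_left, inner_outerProd, inner_outerProd, hau, hbw, sub_self]
    | zero => exact inner_zero_right _
    | add y z _ _ hy hz => rw [inner_add_right, hy, hz, add_zero]
    | smul c y _ hy => rw [inner_smul_right, hy, mul_zero]

end OuterProduct

section Leverage

variable {ι : Type*} [Fintype ι] [DecidableEq ι]

noncomputable def leverage (U : Submodule ℝ (EuclideanSpace ℝ ι)) (j : ι) : ℝ :=
  ‖U.starProjection (single j 1)‖ ^ 2

lemma coh_eq_mul_iSup_leverage (U : Submodule ℝ (EuclideanSpace ℝ ι)) :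
    coh U = (Fintype.card ι : ℝ) / Module.finrank ℝ U * ⨆ j, leverage U j :=
  rfl

lemma leverage_outerSpan {κ : Type*} [Fintype κ] [DecidableEq κ]
    (U₁ : Submodule ℝ (EuclideanSpace ℝ ι)) (U₂ : Submodule ℝ (EuclideanSpace ℝ κ))
    (p : ι × κ) : leverage (outerSpan U₁ U₂) p = leverage U₁ p.1 * leverage U₂ p.2 := by
  rw [leverage, ← outerProd_single_one, starProjection_outerSpan_outerProd, norm_outerProd_sq]
  rfl

end Leverage

lemma Real.iSup_prod_mul_le {ι κ : Type*} [Finite ι] [Finite κ] {f : ι → ℝ} {g : κ → ℝ}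
    (hf : ∀ i, 0 ≤ f i) (hg : ∀ j, 0 ≤ g j) :
    ⨆ p : ι × κ, f p.1 * g p.2 ≤ (⨆ i, f i) * ⨆ j, g j := by
  have hf0 : 0 ≤ ⨆ i, f i := Real.iSup_nonneg hf
  rcases isEmpty_or_nonempty (ι × κ) with h | h
  · rw [Real.iSup_of_isEmpty]
    exact mul_nonneg hf0 (Real.iSup_nonneg hg)
  · refine ciSup_le fun p => mul_le_mul ?_ ?_ (hg p.2) hf0
    · exact le_ciSup (Set.finite_range f).bddAbove p.1
    · exact le_ciSup (Set.finite_range g).bddAbove p.2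

/-- the span `S'` of all vectorized outer products `u ⊗ w`, for
`u ∈ U₁ ⊆ ℝ^{n₁}` and `w ∈ U₂ ⊆ ℝ^{n₂}` (a subspace of `ℝ^{n₁ n₂}`, indexed by
pairs, of dimension `d₁ d₂`), satisfies `μ(S') ≤ μ(U₁) μ(U₂)`. -/
theorem coherence_outer_product_span {n₁ n₂ d₁ d₂ : ℕ}
    (U₁ : Submodule ℝ (EuclideanSpace ℝ (Fin n₁)))
    (U₂ : Submodule ℝ (EuclideanSpace ℝ (Fin n₂)))
    (h₁ : Module.finrank ℝ U₁ = d₁) (h₂ : Module.finrank ℝ U₂ = d₂)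
    (S' : Submodule ℝ (EuclideanSpace ℝ (Fin n₁ × Fin n₂)))
    (hS' : S' = Submodule.span ℝ
      {z : EuclideanSpace ℝ (Fin n₁ × Fin n₂) |
        ∃ u ∈ U₁, ∃ w ∈ U₂, z = WithLp.toLp 2 (fun p => u p.1 * w p.2)})
    (hdim : Module.finrank ℝ S' = d₁ * d₂) :
    coh S' ≤ coh U₁ * coh U₂ := by
  obtain rfl : S' = outerSpan U₁ U₂ := hS'
  simp only [coh_eq_mul_iSup_leverage, leverage_outerSpan, hdim, h₁, h₂, Fintype.card_prod,
    Fintype.card_fin]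
  have hsup := Real.iSup_prod_mul_le (fun i => sq_nonneg ‖U₁.starProjection (single i 1)‖)
    (fun j => sq_nonneg ‖U₂.starProjection (single j 1)‖)
  calc ((n₁ * n₂ : ℕ) : ℝ) / ((d₁ * d₂ : ℕ) : ℝ) * ⨆ p : Fin n₁ × Fin n₂,
          leverage U₁ p.1 * leverage U₂ p.2
      ≤ ((n₁ * n₂ : ℕ) : ℝ) / ((d₁ * d₂ : ℕ) : ℝ) *
          ((⨆ i, leverage U₁ i) * ⨆ j, leverage U₂ j) := by gcongr; exact hsup
    _ = (n₁ / d₁ * ⨆ i, leverage U₁ i) * (n₂ / d₂ * ⨆ j, leverage U₂ j) := by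
        push_cast; ring
end

section
/- Let v ∈ R^n and let Ω be a multiset of m indices drawn uniformly at random from [n] with replacement. Then with probability at least 1 − 2δ, (1−α)(m/n)||v||₂² ≤ ||v_Ω||₂² ≤ (1+α)(m/n)||v||₂², where α = sqrt(2μ(v)log(1/δ)/m) + (2μ(v)/(3m))log(1/δ) and μ(v) = n||v||_∞²/||v||₂². -/
open MeasureTheory

noncomputable def muVec {ι : Type*} [Fintype ι] (v : EuclideanSpace ℝ ι) : ℝ :=
  (Fintype.card ι : ℝ) * (⨆ j : ι, |v j|) ^ 2 / ‖v‖ ^ 2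

/-!
The summands `v_{Ω(i)}²` are i.i.d. with values in `[0, b]`, `b = ‖v‖_∞²`, and mean `‖v‖²/n`,
so `μ(v) = b / mean`. Convexity of `exp` bounds their moment generating function by
`exp (mean / b * (exp (s b) - 1))`, and a Chernoff bound with the optimal exponent of
Bernstein's inequality controls each tail by `δ`. The lower tail needs no separate optimisation,
because `exp (-u) - 1 + u ≤ exp u - 1 - u` for `u ≥ 0`.
-/

open ProbabilityTheory Real

lemma nonneg_of_map_zero_of_hasDerivAt_nonneg {f f' : ℝ → ℝ}
    (hf : ∀ x, HasDerivAt f (f' x) x) (hf₀ : f 0 = 0) (hf' : ∀ x, 0 ≤ x → 0 ≤ f' x)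
    {x : ℝ} (hx : 0 ≤ x) : 0 ≤ f x := by
  have hmono : MonotoneOn f (Set.Ici 0) :=
    monotoneOn_of_hasDerivWithinAt_nonneg (convex_Ici 0)
      (fun y _ => (hf y).continuousAt.continuousWithinAt)
      (fun y _ => (hf y).hasDerivWithinAt)
      (fun y hy => hf' y (interior_subset hy))
  simpa [hf₀] using hmono Set.self_mem_Ici hx hx

lemma one_add_sub_one_mul_exp_nonneg (u : ℝ) : 0 ≤ 1 + (u - 1) * exp u := by
  have h := mul_le_mul_of_nonneg_right (by linarith [add_one_le_exp (-u)] : 1 - u ≤ exp (-u))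
    (exp_pos u).le
  rw [← exp_add, neg_add_cancel, exp_zero] at h
  linarith

lemma exp_sub_one_sub_mul_one_sub_div_three_le {u : ℝ} (hu : 0 ≤ u) :
    (exp u - 1 - u) * (1 - u / 3) ≤ u ^ 2 / 2 := by
  -- the difference `F` satisfies `F 0 = F' 0 = 0` and `F'' = (1 + (u - 1) exp u) / 3 ≥ 0`
  have hE : ∀ x, HasDerivAt (fun y => exp y - 1 - y) (exp x - 1) x := fun x =>
    ((hasDerivAt_exp x).sub_const 1).sub (hasDerivAt_id' x)
  have hW : ∀ x, HasDerivAt (fun y : ℝ => 1 - y / 3) (-(1 / 3)) x := fun x => by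
    simpa using ((hasDerivAt_id' x).div_const 3).const_sub 1
  have hG : ∀ x, HasDerivAt (fun y => y - ((exp y - 1) * (1 - y / 3) - (exp y - 1 - y) / 3))
      ((1 + (x - 1) * exp x) / 3) x := fun x =>
    ((hasDerivAt_id' x).sub ((((hasDerivAt_exp x).sub_const 1).mul (hW x)).sub
      ((hE x).div_const 3))).congr_deriv (by ring)
  have hF : ∀ x, HasDerivAt (fun y => y ^ 2 / 2 - (exp y - 1 - y) * (1 - y / 3))
      (x - ((exp x - 1) * (1 - x / 3) - (exp x - 1 - x) / 3)) x := fun x =>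
    (((hasDerivAt_pow 2 x).div_const 2).sub ((hE x).mul (hW x))).congr_deriv
      (by push_cast; ring)
  have hG₀ := fun x => nonneg_of_map_zero_of_hasDerivAt_nonneg hG (by simp)
    (fun y _ => by linarith [one_add_sub_one_mul_exp_nonneg y]) (x := x)
  linarith [nonneg_of_map_zero_of_hasDerivAt_nonneg hF (by simp) hG₀ hu]

lemma exists_bernstein_exponent {c L : ℝ} (hc : 0 < c) (hL : 0 ≤ L) :
    ∃ u, 0 ≤ u ∧ c * (exp u - 1 - u) - u * (√(2 * c * L) + 2 / 3 * L) ≤ -L := by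
  set τ := √(2 * c * L) + 2 / 3 * L with hτ_def
  set D := c + τ / 3 with hD_def
  have hD : 0 < D := by positivity
  -- `τ / D` minimises `c u² / (2 (1 - u / 3)) - u τ`, the bound from the previous lemma
  refine ⟨τ / D, by positivity, ?_⟩
  have hsq : √(2 * c * L) ^ 2 = 2 * c * L := sq_sqrt (by positivity)
  have hτ : 2 * L * D ≤ τ ^ 2 := by nlinarith [mul_nonneg hL (sqrt_nonneg (2 * c * L))]
  have hexp : c * (exp (τ / D) - 1 - τ / D) ≤ τ ^ 2 / (2 * D) := by
    have h := exp_sub_one_sub_mul_one_sub_div_three_le (u := τ / D) (by positivity)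
    rw [show 1 - τ / D / 3 = c / D by field_simp; ring] at h
    have := mul_le_mul_of_nonneg_right h hD.le
    field_simp at this ⊢
    nlinarith
  have hL_le : L ≤ τ ^ 2 / (2 * D) := by rw [le_div_iff₀ (by positivity)]; linarith
  have hτD : τ / D * τ = 2 * (τ ^ 2 / (2 * D)) := by field_simp
  linarith

lemma exp_mul_le_one_add_div_mul_exp_sub_one (s : ℝ) {b x : ℝ} (hb : 0 < b)
    (hx : x ∈ Set.Icc 0 b) :
    exp (s * x) ≤ 1 + x / b * (exp (s * b) - 1) := by
  have h := convexOn_exp.2 (Set.mem_univ 0) (Set.mem_univ (s * b))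
    (sub_nonneg.2 ((div_le_one hb).2 hx.2)) (div_nonneg hx.1 hb.le) (sub_add_cancel 1 _)
  simp only [smul_eq_mul, mul_zero, exp_zero, mul_one, zero_add] at h
  rw [div_mul_comm, mul_div_cancel_right₀ s hb.ne'] at h
  linarith

section

variable {Ω : Type*} [MeasurableSpace Ω] {μ : Measure Ω} [IsProbabilityMeasure μ]
  {X : Ω → ℝ} {b : ℝ}

lemma mgf_le_exp_integral_div_mul (hXm : Measurable X) (hb : 0 < b)
    (hX : ∀ ω, X ω ∈ Set.Icc 0 b) (s : ℝ) :
    mgf X μ s ≤ exp (μ[X] / b * (exp (s * b) - 1)) := by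
  have hXi : Integrable X μ := .of_mem_Icc 0 b hXm.aemeasurable (ae_of_all _ hX)
  calc mgf X μ s ≤ ∫ ω, (1 + X ω / b * (exp (s * b) - 1)) ∂μ :=
        integral_mono (integrable_exp_mul_of_mem_Icc hXm.aemeasurable (ae_of_all _ hX))
          ((integrable_const 1).add ((hXi.div_const b).mul_const _))
          fun ω => exp_mul_le_one_add_div_mul_exp_sub_one s hb (hX ω)
    _ = 1 + μ[X] / b * (exp (s * b) - 1) := by
        rw [integral_add (integrable_const 1) ((hXi.div_const b).mul_const _), integral_mul_const,
          integral_div, integral_const, probReal_univ, one_smul]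
    _ ≤ exp (μ[X] / b * (exp (s * b) - 1)) := by
        linarith [add_one_le_exp (μ[X] / b * (exp (s * b) - 1))]

variable {ι : Type*} [Fintype ι]

lemma mgf_sum_comp_eval (hXm : Measurable X) (s : ℝ) :
    mgf (fun ω : ι → Ω => ∑ i, X (ω i)) (Measure.pi fun _ => μ) s
      = mgf X μ s ^ Fintype.card ι := by
  have h := (iIndepFun_pi (μ := fun _ : ι => μ) (X := fun _ => X)
    fun _ => hXm.aemeasurable).mgf_sum (t := s) (fun i => hXm.comp (measurable_pi_apply i))
    Finset.univ
  rw [← Finset.card_univ, ← Finset.prod_const]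
  convert h using 1
  · congr 1; ext ω; simp
  · refine Finset.prod_congr rfl fun i _ => ?_
    simp only [mgf]
    exact (integral_comp_eval (μ := fun _ : ι => μ) (f := fun x => exp (s * X x))
      (by fun_prop)).symm

lemma mgf_sum_comp_eval_div_le {c : ℝ} (hXm : Measurable X) (hb : 0 < b)
    (hX : ∀ ω, X ω ∈ Set.Icc 0 b) (hmean : Fintype.card ι * μ[X] = c * b) (u : ℝ) :
    mgf (fun ω : ι → Ω => ∑ i, X (ω i)) (Measure.pi fun _ => μ) (u / b)
      ≤ exp (c * (exp u - 1)) := by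
  rw [mgf_sum_comp_eval hXm, ← mul_div_cancel_right₀ c hb.ne', ← hmean, mul_div_assoc, mul_assoc,
    exp_nat_mul]
  refine pow_le_pow_left₀ mgf_nonneg ?_ _
  simpa [div_mul_cancel₀ u hb.ne'] using mgf_le_exp_integral_div_mul hXm hb hX (u / b)

lemma integrable_exp_mul_sum_comp_eval (hXm : Measurable X) (hX : ∀ ω, X ω ∈ Set.Icc 0 b)
    (t : ℝ) :
    Integrable (fun ω : ι → Ω => exp (t * ∑ i, X (ω i))) (Measure.pi fun _ => μ) :=
  integrable_exp_mul_of_mem_Icc (a := ∑ _ : ι, 0) (b := ∑ _ : ι, b)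
    (Finset.measurable_sum _ fun i _ => hXm.comp (measurable_pi_apply i)).aemeasurable
    (ae_of_all _ fun ω => ⟨Finset.sum_le_sum fun i _ => (hX (ω i)).1,
      Finset.sum_le_sum fun i _ => (hX (ω i)).2⟩)

variable {c L : ℝ}

lemma measureReal_bernstein_upper (hXm : Measurable X) (hb : 0 < b)
    (hX : ∀ ω, X ω ∈ Set.Icc 0 b) (hc : 0 < c) (hmean : Fintype.card ι * μ[X] = c * b)
    (hL : 0 ≤ L) :
    (Measure.pi fun _ : ι => μ).real
      {ω | (c + (√(2 * c * L) + 2 / 3 * L)) * b ≤ ∑ i, X (ω i)} ≤ exp (-L) := by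
  obtain ⟨u, hu, hexp⟩ := exists_bernstein_exponent hc hL
  set τ := √(2 * c * L) + 2 / 3 * L
  calc _ ≤ exp (-(u / b) * ((c + τ) * b)) * mgf (fun ω : ι → Ω => ∑ i, X (ω i))
          (Measure.pi fun _ => μ) (u / b) :=
        measure_ge_le_exp_mul_mgf _ (by positivity)
          (integrable_exp_mul_sum_comp_eval hXm hX _)
    _ ≤ exp (-(u / b) * ((c + τ) * b)) * exp (c * (exp u - 1)) := by
        gcongr
        exact mgf_sum_comp_eval_div_le hXm hb hX hmean _
    _ = exp (c * (exp u - 1 - u) - u * τ) := by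
        rw [← exp_add]; congr 1; field_simp; ring
    _ ≤ exp (-L) := exp_le_exp.2 hexp

lemma measureReal_bernstein_lower (hXm : Measurable X) (hb : 0 < b)
    (hX : ∀ ω, X ω ∈ Set.Icc 0 b) (hc : 0 < c) (hmean : Fintype.card ι * μ[X] = c * b)
    (hL : 0 ≤ L) :
    (Measure.pi fun _ : ι => μ).real
      {ω | ∑ i, X (ω i) ≤ (c - (√(2 * c * L) + 2 / 3 * L)) * b} ≤ exp (-L) := by
  obtain ⟨u, hu, hexp⟩ := exists_bernstein_exponent hc hL
  set τ := √(2 * c * L) + 2 / 3 * L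
  have hsinh : exp (-u) - 1 + u ≤ exp u - 1 - u := by
    linarith [self_le_sinh_iff.2 hu, sinh_eq u]
  calc _ ≤ exp (-(-u / b) * ((c - τ) * b)) * mgf (fun ω : ι → Ω => ∑ i, X (ω i))
          (Measure.pi fun _ => μ) (-u / b) :=
        measure_le_le_exp_mul_mgf _ (div_nonpos_of_nonpos_of_nonneg (neg_nonpos.2 hu) hb.le)
          (integrable_exp_mul_sum_comp_eval hXm hX _)
    _ ≤ exp (-(-u / b) * ((c - τ) * b)) * exp (c * (exp (-u) - 1)) := by
        gcongr
        exact mgf_sum_comp_eval_div_le hXm hb hX hmean _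
    _ = exp (c * (exp (-u) - 1 + u) - u * τ) := by
        rw [← exp_add]; congr 1; field_simp; ring
    _ ≤ exp (-L) := exp_le_exp.2 (by nlinarith [mul_le_mul_of_nonneg_left hsinh hc.le])

theorem bernstein_sum_comp_eval [Nonempty ι] (hXm : Measurable X)
    (hX : ∀ ω, X ω ∈ Set.Icc 0 b) (hmean : 0 < μ[X]) (hL : 0 ≤ L) {α : ℝ}
    (hα : α = √(2 * (b / μ[X]) * L / Fintype.card ι) +
      2 * (b / μ[X]) / (3 * Fintype.card ι) * L) :
    1 - ENNReal.ofReal (2 * exp (-L)) ≤ (Measure.pi fun _ : ι => μ)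
      {ω | (1 - α) * (Fintype.card ι * μ[X]) ≤ ∑ i, X (ω i) ∧
        ∑ i, X (ω i) ≤ (1 + α) * (Fintype.card ι * μ[X])} := by
  set m : ℝ := (Fintype.card ι : ℝ)
  set E := μ[X]
  have hm : 0 < m := by positivity
  have hb : 0 < b := hmean.trans_le <| by
    simpa using integral_mono (μ := μ) (.of_mem_Icc 0 b hXm.aemeasurable (ae_of_all _ hX))
      (integrable_const b) fun ω => (hX ω).2
  set c := m * E / b
  have hc : 0 < c := by positivity
  have hmean_eq : m * E = c * b := (div_mul_cancel₀ _ hb.ne').symm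
  have hdev : α * (m * E) = (√(2 * c * L) + 2 / 3 * L) * b := by
    have hsqrt : √(2 * (b / E) * L / m) * (m * E) = √(2 * c * L) * b := by
      rw [← sqrt_sq (by positivity : 0 ≤ m * E), ← sqrt_mul' _ (by positivity),
        ← sqrt_sq hb.le, ← sqrt_mul' _ (by positivity), sqrt_sq hb.le]
      congr 1; field_simp; linear_combination L * hmean_eq
    rw [hα, add_mul, hsqrt]; field_simp
  set P := Measure.pi fun _ : ι => μ
  have hofReal : ∀ s, P.real s ≤ exp (-L) → P s ≤ ENNReal.ofReal (exp (-L)) := fun s hs => by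
    rw [← ofReal_measureReal]; exact ENNReal.ofReal_le_ofReal hs
  have hbad : P {ω | (1 - α) * (m * E) ≤ ∑ i, X (ω i) ∧ ∑ i, X (ω i) ≤ (1 + α) * (m * E)}ᶜ
      ≤ ENNReal.ofReal (2 * exp (-L)) := calc
    _ ≤ P ({ω | ∑ i, X (ω i) ≤ (c - (√(2 * c * L) + 2 / 3 * L)) * b} ∪
          {ω | (c + (√(2 * c * L) + 2 / 3 * L)) * b ≤ ∑ i, X (ω i)}) := by
        refine measure_mono fun ω hω => ?_
        simp only [Set.mem_compl_iff, Set.mem_ofPred_eq, not_and_or, not_le] at hω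
        rcases hω with hlow | hhigh
        · left; simp only [Set.mem_ofPred_eq]; nlinarith
        · right; simp only [Set.mem_ofPred_eq]; nlinarith
    _ ≤ ENNReal.ofReal (exp (-L)) + ENNReal.ofReal (exp (-L)) :=
        (measure_union_le _ _).trans <| add_le_add
          (hofReal _ (measureReal_bernstein_lower hXm hb hX hc hmean_eq hL))
          (hofReal _ (measureReal_bernstein_upper hXm hb hX hc hmean_eq hL))
    _ = ENNReal.ofReal (2 * exp (-L)) := by rw [← ENNReal.ofReal_add, two_mul] <;> positivity
  calc _ ≤ 1 - P {ω | (1 - α) * (m * E) ≤ ∑ i, X (ω i) ∧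
          ∑ i, X (ω i) ≤ (1 + α) * (m * E)}ᶜ := tsub_le_tsub_left hbad 1
    _ ≤ _ := by
        rw [tsub_le_iff_right, ← measure_univ (μ := P)]
        exact measure_univ_le_add_compl _

end

lemma integral_uniformOfFintype {α : Type*} [Fintype α] [Nonempty α] [MeasurableSpace α]
    [MeasurableSingletonClass α] (f : α → ℝ) :
    ∫ a, f a ∂(PMF.uniformOfFintype α).toMeasure = (∑ a, f a) / Fintype.card α := by
  simp [PMF.integral_eq_sum, PMF.uniformOfFintype_apply, ← Finset.mul_sum, div_eq_inv_mul]

theorem subsampled_norm_concentration_general {n m : ℕ} [NeZero n]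
    (v : EuclideanSpace ℝ (Fin n))
    {δ : ℝ} (hδ0 : 0 < δ) (hδ1 : δ < 1) (α : ℝ)
    (hα : α = Real.sqrt (2 * muVec v * Real.log (1 / δ) / m) +
      (2 * muVec v / (3 * m)) * Real.log (1 / δ)) :
    1 - ENNReal.ofReal (2 * δ) ≤
      (Measure.pi fun _ : Fin m => (PMF.uniformOfFintype (Fin n)).toMeasure)
        {ω : Fin m → Fin n |
          (1 - α) * (m / n) * ‖v‖ ^ 2 ≤ ∑ i : Fin m, (v (ω i)) ^ 2 ∧
          ∑ i : Fin m, (v (ω i)) ^ 2 ≤ (1 + α) * (m / n) * ‖v‖ ^ 2} := by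
  rcases eq_or_ne m 0 with rfl | hm
  · simp
  rcases eq_or_ne v 0 with rfl | hv
  · simp
  have : Nonempty (Fin m) := ⟨⟨0, Nat.pos_of_ne_zero hm⟩⟩
  have hmean : ∫ j, v j ^ 2 ∂(PMF.uniformOfFintype (Fin n)).toMeasure = ‖v‖ ^ 2 / n := by
    rw [integral_uniformOfFintype, EuclideanSpace.real_norm_sq_eq, Fintype.card_fin]
  have hX : ∀ j, v j ^ 2 ∈ Set.Icc 0 ((⨆ j, |v j|) ^ 2) := fun j => by
    rw [← sq_abs (v j)]
    exact ⟨sq_nonneg _, pow_le_pow_left₀ (abs_nonneg _)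
      (le_ciSup (Set.finite_range fun j => |v j|).bddAbove j) 2⟩
  have hμ : muVec v = (⨆ j, |v j|) ^ 2 / (‖v‖ ^ 2 / n) := by
    rw [muVec, Fintype.card_fin]; field_simp
  have hexp : exp (-log (1 / δ)) = δ := by rw [one_div, log_inv, neg_neg, exp_log hδ0]
  have hmean_pos : 0 < ‖v‖ ^ 2 / n := by
    have := norm_pos_iff.2 hv; have := NeZero.pos n; positivity
  have h := bernstein_sum_comp_eval (ι := Fin m) (μ := (PMF.uniformOfFintype (Fin n)).toMeasure)
    .of_discrete hX (hmean ▸ hmean_pos) (log_nonneg (one_le_one_div hδ0 hδ1.le)) (α := α)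
    (by rw [hmean, ← hμ, Fintype.card_fin, hα])
  rw [hexp, hmean, Fintype.card_fin] at h
  convert h using 6 <;> ring

/-- for `Ω = (Ω(1),…,Ω(m))` i.i.d. uniform on `[n]`, with probability
at least `1 - 2δ`,
`(1-α)(m/n)‖v‖² ≤ ‖v_Ω‖² ≤ (1+α)(m/n)‖v‖²`, where
`α = √(2 μ(v) log(1/δ)/m) + (2 μ(v)/(3m)) log(1/δ)`. -/
theorem subsampled_norm_concentration {n m : ℕ} [NeZero n]
    (v : EuclideanSpace ℝ (Fin n)) (hv : v ≠ 0)
    {δ : ℝ} (hδ0 : 0 < δ) (hδ1 : δ < 1) (α : ℝ)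
    (hα : α = Real.sqrt (2 * muVec v * Real.log (1 / δ) / m) +
      (2 * muVec v / (3 * m)) * Real.log (1 / δ)) :
    1 - ENNReal.ofReal (2 * δ) ≤
      (Measure.pi fun _ : Fin m => (PMF.uniformOfFintype (Fin n)).toMeasure)
        {ω : Fin m → Fin n |
          (1 - α) * (m / n) * ‖v‖ ^ 2 ≤ ∑ i : Fin m, (v (ω i)) ^ 2 ∧
          ∑ i : Fin m, (v (ω i)) ^ 2 ≤ (1 + α) * (m / n) * ‖v‖ ^ 2} :=
  subsampled_norm_concentration_general v hδ0 hδ1 α hα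
end

section
/- Consider a family of n₁×n₂ rank-r block matrices M = ∑_{k=1}^r u_k v_k^T with u_k supported on block R_k of size n₁/r (entries in [1,√μ₀]) and v_k = 1_{C_k} the indicator of block C_k of size n₂/(μ₀r). Then the column space U of any such M satisfies μ(U) ≤ μ₀. -/
/-!
The `u k` have disjoint supports, so they are orthogonal and nonzero: `U` has dimension `r`, and
`e_j` is orthogonal to every `u k` except the one whose block contains `j`, so its projection onto
`U` is its projection onto that single line, of squared norm `u k j ^ 2 / ‖u k‖ ^ 2 ≤ μ₀ / l₁`
because `u k` has `l₁` entries at least `1`. The factor `n₁ / dim U = l₁` then gives `μ₀`.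
-/

open scoped InnerProductSpace
open Finset Submodule

section OrthogonalFamily

variable {𝕜 E ι : Type*} [RCLike 𝕜] [NormedAddCommGroup E] [InnerProductSpace 𝕜 E] [Fintype ι]
  {u : ι → E}

theorem starProjection_span_range_eq_sum [(span 𝕜 (Set.range u)).HasOrthogonalProjection]
    (ho : Pairwise fun i j => ⟪u i, u j⟫_𝕜 = 0) (x : E) :
    (span 𝕜 (Set.range u)).starProjection x =
      ∑ i, (⟪u i, x⟫_𝕜 / ((‖u i‖ ^ 2 : ℝ) : 𝕜)) • u i := by
  refine eq_starProjection_of_mem_of_inner_eq_zero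
    (sum_mem fun i _ => smul_mem _ _ (subset_span (Set.mem_range_self i))) fun w hw => ?_
  rw [← inner_eq_zero_symm]
  induction hw using span_induction with
  | mem w hw =>
    obtain ⟨k, rfl⟩ := hw
    have hsum : ⟪u k, ∑ i, (⟪u i, x⟫_𝕜 / ((‖u i‖ ^ 2 : ℝ) : 𝕜)) • u i⟫_𝕜 =
        ⟪u k, x⟫_𝕜 / ((‖u k‖ ^ 2 : ℝ) : 𝕜) * ⟪u k, u k⟫_𝕜 := by
      rw [inner_sum, sum_eq_single k (fun i _ hik => by rw [inner_smul_right, ho hik.symm,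
        mul_zero]) (by simp), inner_smul_right]
    rw [inner_sub_right, hsum, inner_self_eq_norm_sq_to_K]
    by_cases hk : u k = 0
    · simp [hk]
    · have : ((‖u k‖ ^ 2 : ℝ) : 𝕜) ≠ 0 := by simpa using hk
      push_cast at this ⊢
      rw [div_mul_cancel₀ _ this, sub_self]
  | zero => simp
  | add w w' _ _ hw hw' => rw [inner_add_left, hw, hw', add_zero]
  | smul a w _ hw => rw [inner_smul_left, hw, mul_zero]

theorem norm_starProjection_span_range_sq_of_inner_eq_zero
    [(span 𝕜 (Set.range u)).HasOrthogonalProjection]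
    (ho : Pairwise fun i j => ⟪u i, u j⟫_𝕜 = 0) {x : E} {k : ι}
    (hx : ∀ i, i ≠ k → ⟪u i, x⟫_𝕜 = 0) :
    ‖(span 𝕜 (Set.range u)).starProjection x‖ ^ 2 = ‖⟪u k, x⟫_𝕜‖ ^ 2 / ‖u k‖ ^ 2 := by
  rw [starProjection_span_range_eq_sum ho,
    sum_eq_single k (fun i _ hik => by rw [hx i hik, zero_div, zero_smul]) (by simp),
    norm_smul, norm_div]
  by_cases hk : u k = 0
  · simp [hk]
  · have : ‖u k‖ ≠ 0 := norm_ne_zero_iff.mpr hk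
    simp only [RCLike.norm_ofReal, abs_pow, abs_norm]
    field_simp

end OrthogonalFamily

section EuclideanSpace

variable {𝕜 ι : Type*} [RCLike 𝕜] [Fintype ι]

theorem EuclideanSpace.inner_eq_zero_of_disjoint_support {x y : EuclideanSpace 𝕜 ι}
    (h : ∀ j, x j = 0 ∨ y j = 0) : ⟪x, y⟫_𝕜 = 0 :=
  sum_eq_zero fun j _ => by rcases h j with h | h <;> simp [h]

theorem EuclideanSpace.card_le_norm_sq {x : EuclideanSpace 𝕜 ι} {s : Finset ι}
    (h : ∀ j ∈ s, 1 ≤ ‖x j‖) : (#s : ℝ) ≤ ‖x‖ ^ 2 := by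
  rw [EuclideanSpace.norm_sq_eq]
  calc (#s : ℝ) = ∑ _j ∈ s, 1 := by simp
    _ ≤ ∑ j ∈ s, ‖x j‖ ^ 2 := sum_le_sum fun j hj => one_le_pow₀ (h j hj)
    _ ≤ ∑ j, ‖x j‖ ^ 2 := sum_le_sum_of_subset_of_nonneg (subset_univ s)
      fun j _ _ => by positivity

end EuclideanSpace

section BlockFamily

variable {r l : ℕ} {u : Fin r → EuclideanSpace ℝ (Fin (r * l))}

theorem pairwise_inner_eq_zero_of_block_support
    (hoff : ∀ (k : Fin r) (j : Fin (r * l)), (j : ℕ) / l ≠ (k : ℕ) → u k j = 0) :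
    Pairwise fun k k' => ⟪u k, u k'⟫_ℝ = 0 := by
  intro k k' hkk'
  refine EuclideanSpace.inner_eq_zero_of_disjoint_support fun j => ?_
  by_cases hj : (j : ℕ) / l = k
  · exact .inr (hoff k' j (hj ▸ Fin.val_ne_of_ne hkk'))
  · exact .inl (hoff k j hj)

theorem le_norm_sq_of_one_le_on_block
    (hone : ∀ (k : Fin r) (j : Fin (r * l)), (j : ℕ) / l = (k : ℕ) → 1 ≤ u k j) (k : Fin r) :
    (l : ℝ) ≤ ‖u k‖ ^ 2 := by
  have hinj : Function.Injective (Fin.mkDivMod k : Fin l → Fin (r * l)) := fun i i' h => by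
    simpa using congrArg Fin.modNat h
  have hblock : ∀ j ∈ univ.image (Fin.mkDivMod k), 1 ≤ ‖u k j‖ := by
    simp only [mem_image, mem_univ, true_and, forall_exists_index, forall_apply_eq_imp_iff]
    intro i
    have hdiv := congrArg Fin.val (Fin.divNat_mkDivMod k i)
    exact (hone k _ hdiv).trans (Real.le_norm_self _)
  simpa [card_image_of_injective _ hinj] using EuclideanSpace.card_le_norm_sq hblock

theorem norm_starProjection_single_sq_le_of_block {μ₀ : ℝ}
    (hblock : ∀ (k : Fin r) (j : Fin (r * l)), (j : ℕ) / l = (k : ℕ) →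
      1 ≤ u k j ∧ u k j ≤ Real.sqrt μ₀)
    (hoff : ∀ (k : Fin r) (j : Fin (r * l)), (j : ℕ) / l ≠ (k : ℕ) → u k j = 0)
    (j : Fin (r * l)) :
    ‖(span ℝ (Set.range u)).starProjection (EuclideanSpace.single j 1)‖ ^ 2 ≤ μ₀ / l := by
  have hinner : ∀ k, ⟪u k, EuclideanSpace.single j 1⟫_ℝ = u k j := fun k => by
    simp [EuclideanSpace.inner_single_right]
  have hjk := hblock j.divNat j rfl
  have hμ₀ : 1 ≤ μ₀ := Real.one_le_sqrt.mp (hjk.1.trans hjk.2)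
  have hl : (0 : ℝ) < l := Nat.cast_pos.mpr (Nat.pos_of_mul_pos_left j.pos)
  rw [norm_starProjection_span_range_sq_of_inner_eq_zero (k := j.divNat)
    (pairwise_inner_eq_zero_of_block_support hoff)
    fun k hk => by rw [hinner, hoff k j fun h => hk (Fin.ext h.symm)], hinner, Real.norm_eq_abs,
    sq_abs]
  refine div_le_div₀ (by linarith) ?_ hl
    (le_norm_sq_of_one_le_on_block (fun k j h => (hblock k j h).1) _)
  calc u j.divNat j ^ 2 ≤ Real.sqrt μ₀ ^ 2 := pow_le_pow_left₀ (by linarith) hjk.2 2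
    _ = μ₀ := Real.sq_sqrt (by linarith)

end BlockFamily

/-- for the block family of rank-`r` matrices `∑_k u_k v_kᵀ` where
`u_k ∈ ℝ^{n₁}` (with `n₁ = r l₁`) is supported on the block
`R_k = {j : j/l₁ = k}` with entries in `[1, √μ₀]` there, the column space
`U = span(u₁,…,u_r)` has coherence `μ(U) ≤ μ₀`. -/
theorem block_matrix_coherence {r l₁ : ℕ} (hr : 0 < r) (hl : 0 < l₁) (μ₀ : ℝ)
    (u : Fin r → EuclideanSpace ℝ (Fin (r * l₁)))
    (hblock : ∀ (k : Fin r) (j : Fin (r * l₁)), (j : ℕ) / l₁ = (k : ℕ) →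
      1 ≤ u k j ∧ u k j ≤ Real.sqrt μ₀)
    (hoff : ∀ (k : Fin r) (j : Fin (r * l₁)), (j : ℕ) / l₁ ≠ (k : ℕ) → u k j = 0) :
    coh (Submodule.span ℝ (Set.range u)) ≤ μ₀ := by
  have hl' : (0 : ℝ) < l₁ := Nat.cast_pos.mpr hl
  have hμ₀ : 0 ≤ μ₀ := by
    have h := hblock ⟨0, hr⟩ ⟨0, Nat.mul_pos hr hl⟩ (Nat.zero_div l₁)
    exact zero_le_one.trans (Real.one_le_sqrt.mp (h.1.trans h.2))
  have hne : ∀ k, u k ≠ 0 := fun k h => by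
    have := le_norm_sq_of_one_le_on_block (fun k j h => (hblock k j h).1) k
    rw [h, norm_zero] at this
    linarith
  have hrank : Module.finrank ℝ (span ℝ (Set.range u)) = r := by
    rw [finrank_span_eq_card (linearIndependent_of_ne_zero_of_inner_eq_zero hne
      (pairwise_inner_eq_zero_of_block_support hoff)), Fintype.card_fin]
  have hsup : ⨆ j : Fin (r * l₁), ‖((span ℝ (Set.range u)).orthogonalProjectionOnto
      (EuclideanSpace.single j 1) : EuclideanSpace ℝ (Fin (r * l₁)))‖ ^ 2 ≤ μ₀ / l₁ :=
    Real.iSup_le (fun j => by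
      simpa only [starProjection_apply] using
        norm_starProjection_single_sq_le_of_block hblock hoff j) (by positivity)
  have hcard : ((r * l₁ : ℕ) : ℝ) / r = l₁ := by
    have : (r : ℝ) ≠ 0 := Nat.cast_ne_zero.mpr hr.ne'
    push_cast
    field_simp
  rw [coh, hrank, Fintype.card_fin, hcard]
  calc (l₁ : ℝ) * _ ≤ l₁ * (μ₀ / l₁) := mul_le_mul_of_nonneg_left hsup hl'.le
    _ = μ₀ := by field_simp
end

section
/- Suppose each entry of an n₁×n₂ matrix is observed independently with probability p, and consider the family of block matrices above, where unique recovery requires at least one observed entry in each of the n₁ rows of the diagonal blocks (each row of a block having n₂/(μ₀r) entries). If the per-row miss probability π₁ = (1−p)^{n₂/(μ₀r)} satisfies (1−π₁)^{n₁} ≥ 1−δ with δ < 1/2, then log(1−p) ≤ (μ₀ r/n₂) log(2δ/n₁). -/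
/-! Taking logarithms of `1 - δ ≤ (1 - π₁)^{n₁}` and using `log (1 - π₁) ≤ -π₁` together with
`log (1 - δ) ≥ -2δ` for `δ ≤ 1/2` gives `π₁ ≤ 2δ/n₁`; since `π₁ = (1 - p)^{l₂}` with
`l₂ = n₂/(μ₀ r)`, a second logarithm yields the bound on `log (1 - p)`. -/

namespace Real

theorem neg_two_mul_le_log_one_sub {δ : ℝ} (hδ0 : 0 ≤ δ) (hδ : δ ≤ 1 / 2) :
    -(2 * δ) ≤ log (1 - δ) := by
  have hpos : 0 < 1 - δ := by linarith
  calc -(2 * δ) ≤ 1 - (1 - δ)⁻¹ := by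
        have : (1 - δ)⁻¹ ≤ 1 + 2 * δ := by
          rw [inv_le_iff_one_le_mul₀ hpos]
          nlinarith
        linarith
    _ ≤ log (1 - δ) := one_sub_inv_le_log_of_pos hpos

theorem le_two_mul_div_of_one_sub_le_one_sub_pow {q δ : ℝ} {n : ℕ} (hn : 0 < n) (hq : q < 1)
    (hδ0 : 0 ≤ δ) (hδ : δ ≤ 1 / 2) (h : 1 - δ ≤ (1 - q) ^ n) : q ≤ 2 * δ / n := by
  have hn' : (0 : ℝ) < n := by exact_mod_cast hn
  have hlog : log (1 - δ) ≤ n * log (1 - q) := by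
    rw [← log_pow]
    exact log_le_log (by linarith) h
  have hlogq : log (1 - q) ≤ -q := by
    linarith [log_le_sub_one_of_pos (by linarith : 0 < 1 - q)]
  rw [le_div_iff₀ hn']
  nlinarith [neg_two_mul_le_log_one_sub hδ0 hδ]

end Real

/-- passive lower bound computation: each entry of an `n₁ × n₂`
matrix is observed independently with probability `p`; each row of a diagonal
block has `l₂ = n₂/(μ₀ r)` entries, so the per-row miss probability is
`π₁ = (1-p)^{l₂}`. If all `n₁` rows are hit with probability at least `1-δ`
(`δ < 1/2`), i.e. `(1-π₁)^{n₁} ≥ 1-δ`, then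
`log(1-p) ≤ (μ₀ r/n₂) log(2δ/n₁)`. -/
theorem passive_lower_bound_condition {n₁ n₂ r μ₀ l₂ : ℕ}
    (hn₁ : 0 < n₁) (hr : 0 < r) (hμ₀ : 0 < μ₀) (hl₂ : 0 < l₂)
    (hfac : n₂ = μ₀ * r * l₂)
    (p δ : ℝ) (hp0 : 0 < p) (hp1 : p < 1) (hδ0 : 0 < δ) (hδ : δ < 1 / 2)
    (hsucc : 1 - δ ≤ (1 - (1 - p) ^ l₂) ^ n₁) :
    Real.log (1 - p) ≤ ((μ₀ : ℝ) * r / n₂) * Real.log (2 * δ / n₁) := by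
  have hπ : (1 - p) ^ l₂ ≤ 2 * δ / n₁ :=
    Real.le_two_mul_div_of_one_sub_le_one_sub_pow hn₁
      (pow_lt_one₀ (by linarith) (by linarith) hl₂.ne') hδ0.le hδ.le hsucc
  have hlog : l₂ * Real.log (1 - p) ≤ Real.log (2 * δ / n₁) := by
    rw [← Real.log_pow]
    exact Real.log_le_log (pow_pos (by linarith) _) hπ
  have hcoef : ((μ₀ : ℝ) * r / n₂) = 1 / l₂ := by
    subst hfac
    push_cast
    field_simp
  rw [hcoef, one_div, inv_mul_eq_div, le_div_iff₀ (by exact_mod_cast hl₂)]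
  linarith
end

section
/- If X ~ χ²_d (chi-squared with d degrees of freedom), then with probability at least 1 − 2δ: −2√(d log(1/δ)) ≤ X − d ≤ 2√(d log(1/δ)) + 2 log(1/δ). -/
/-!
Chernoff's method. For `t < 1/2` a standard Gaussian `Y` has
`𝔼 exp (t Y²) = (1 - 2t)^(-1/2)`, so by independence `X = ∑ Y_i²` has cumulant generating
function `-(d/2) log (1 - 2t)`. Write `m = √d` and `s = √(log (1/δ))`. For the upper tail take
`t = s / (m + 2s)` and use `log z ≤ (z - z⁻¹) / 2` for `z ≥ 1` (this is `w ≤ sinh w` for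
`w = log z`); for the lower tail take `t = -s/m` and use `2x / (x + 2) ≤ log (1 + x)`. In both
cases the Chernoff exponent is at most `-s²`, so each tail has probability at most `δ`.
-/

open MeasureTheory ProbabilityTheory Real

theorem Real.log_le_sub_inv_div_two {x : ℝ} (hx : 1 ≤ x) : log x ≤ (x - x⁻¹) / 2 := by
  have hx0 : 0 < x := by linarith
  have h := self_le_sinh_iff.2 (log_nonneg hx)
  rwa [sinh_eq, exp_neg, exp_log hx0] at h

lemma chiSq_upper_exponent_le {m s : ℝ} (hm : 0 < m) (hs : 0 ≤ s) :
    -(s / (m + 2 * s)) * (m ^ 2 + 2 * (m * s) + 2 * s ^ 2)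
      + -(m ^ 2 / 2) * log (1 - 2 * (s / (m + 2 * s))) ≤ -s ^ 2 := by
  have hz : 1 - 2 * (s / (m + 2 * s)) = ((m + 2 * s) / m)⁻¹ := by field_simp; ring
  have hlog := log_le_sub_inv_div_two (x := (m + 2 * s) / m) (by rw [le_div_iff₀ hm]; linarith)
  rw [hz, log_inv]
  have key : -(s / (m + 2 * s)) * (m ^ 2 + 2 * (m * s) + 2 * s ^ 2)
      + m ^ 2 / 2 * (((m + 2 * s) / m - ((m + 2 * s) / m)⁻¹) / 2) = -s ^ 2 := by
    field_simp; ring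
  nlinarith [mul_le_mul_of_nonneg_left hlog (by positivity : (0:ℝ) ≤ m ^ 2 / 2)]

lemma chiSq_lower_exponent_le {m s : ℝ} (hm : 0 < m) (hs : 0 ≤ s) :
    -(-(s / m)) * (m ^ 2 - 2 * (m * s))
      + -(m ^ 2 / 2) * log (1 - 2 * (-(s / m))) ≤ -s ^ 2 := by
  have hlog := le_log_one_add_of_nonneg (x := 2 * (s / m)) (by positivity)
  rw [show 1 - 2 * (-(s / m)) = 1 + 2 * (s / m) by ring]
  have key : -(-(s / m)) * (m ^ 2 - 2 * (m * s))
      + -(m ^ 2 / 2) * (2 * (2 * (s / m)) / (2 * (s / m) + 2)) = -s ^ 2 - s ^ 3 / (m + s) := by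
    field_simp; ring
  have : 0 ≤ s ^ 3 / (m + s) := by positivity
  nlinarith [mul_le_mul_of_nonneg_left hlog (by positivity : (0:ℝ) ≤ m ^ 2 / 2)]

lemma mgf_sq_gaussianReal {t : ℝ} (ht : t < 1 / 2) :
    mgf (fun x => x ^ 2) (gaussianReal 0 1) t = (√(1 - 2 * t))⁻¹ := by
  have hpdf : ∀ x, gaussianPDFReal 0 1 x * exp (t * x ^ 2)
      = (√(2 * π))⁻¹ * exp (-(1 / 2 - t) * x ^ 2) := fun x => by
    simp only [gaussianPDFReal, NNReal.coe_one, mul_one, sub_zero]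
    rw [mul_assoc, ← exp_add]
    ring_nf
  rw [mgf, integral_gaussianReal_eq_integral_smul one_ne_zero]
  simp only [smul_eq_mul, hpdf]
  rw [integral_const_mul, integral_gaussian,
    show π / (1 / 2 - t) = 2 * π / (1 - 2 * t) by field_simp, sqrt_div' _ (by linarith)]
  field_simp

section

variable {Ω : Type*} [MeasurableSpace Ω] {P : Measure Ω}

lemma mgf_sq_of_map_eq_gaussianReal {X : Ω → ℝ} (hX : Measurable X)
    (hgauss : P.map X = gaussianReal 0 1) {t : ℝ} (ht : t < 1 / 2) :
    mgf (fun ω => X ω ^ 2) P t = (√(1 - 2 * t))⁻¹ := by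
  rw [← mgf_sq_gaussianReal ht, ← hgauss, mgf_map hX.aemeasurable (by fun_prop)]
  rfl

variable {d : ℕ} {Y : Fin d → Ω → ℝ}

lemma mgf_sum_sq_of_gaussian (hmeas : ∀ i, Measurable (Y i))
    (hindep : iIndepFun Y P) (hgauss : ∀ i, P.map (Y i) = gaussianReal 0 1)
    {t : ℝ} (ht : t < 1 / 2) :
    mgf (fun ω => ∑ i, Y i ω ^ 2) P t = (√(1 - 2 * t))⁻¹ ^ d := by
  have hsq : iIndepFun (fun i ω => Y i ω ^ 2) P :=
    hindep.comp (fun _ x => x ^ 2) (fun _ => by fun_prop)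
  have hprod := hsq.mgf_sum (t := t) (fun i => (hmeas i).pow_const 2) Finset.univ
  simp only [Finset.sum_fn] at hprod
  rw [hprod, Finset.prod_congr rfl fun i _ => mgf_sq_of_map_eq_gaussianReal (hmeas i) (hgauss i) ht]
  simp

lemma cgf_sum_sq_of_gaussian (hmeas : ∀ i, Measurable (Y i))
    (hindep : iIndepFun Y P) (hgauss : ∀ i, P.map (Y i) = gaussianReal 0 1)
    {t : ℝ} (ht : t < 1 / 2) :
    Integrable (fun ω => exp (t * ∑ i, Y i ω ^ 2)) P ∧
      cgf (fun ω => ∑ i, Y i ω ^ 2) P t = -(d / 2) * log (1 - 2 * t) := by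
  have hmgf := mgf_sum_sq_of_gaussian hmeas hindep hgauss ht
  have : IsProbabilityMeasure P := hindep.isProbabilityMeasure
  have hpos : 0 < mgf (fun ω => ∑ i, Y i ω ^ 2) P t := by
    rw [hmgf]; exact pow_pos (inv_pos.2 (sqrt_pos.2 (by linarith))) d
  refine ⟨mgf_pos_iff.1 hpos, ?_⟩
  rw [cgf, hmgf, log_pow, log_inv, log_sqrt (by linarith)]
  ring

lemma measure_sum_sq_gt_le (hmeas : ∀ i, Measurable (Y i)) (hindep : iIndepFun Y P)
    (hgauss : ∀ i, P.map (Y i) = gaussianReal 0 1) {L : ℝ} (hL : 0 ≤ L) :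
    P {ω | d + 2 * √(d * L) + 2 * L < ∑ i, Y i ω ^ 2} ≤ ENNReal.ofReal (exp (-L)) := by
  have : IsProbabilityMeasure P := hindep.isProbabilityMeasure
  rcases Nat.eq_zero_or_pos d with rfl | hd
  · simp [not_lt.2 (by linarith : 0 ≤ 2 * L)]
  set m := √(d : ℝ)
  set s := √L
  have hm : 0 < m := sqrt_pos.2 (by exact_mod_cast hd)
  have hs : 0 ≤ s := sqrt_nonneg L
  have hdm : (d : ℝ) = m ^ 2 := (sq_sqrt (Nat.cast_nonneg d)).symm
  have hLs : L = s ^ 2 := (sq_sqrt hL).symm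
  have hdL : √(d * L) = m * s := sqrt_mul (Nat.cast_nonneg d) L
  have ht : s / (m + 2 * s) < 1 / 2 := by
    rw [div_lt_iff₀ (by positivity)]; linarith
  obtain ⟨hint, hcgf⟩ := cgf_sum_sq_of_gaussian hmeas hindep hgauss ht
  calc P {ω | d + 2 * √(d * L) + 2 * L < ∑ i, Y i ω ^ 2}
      ≤ P {ω | m ^ 2 + 2 * (m * s) + 2 * s ^ 2 ≤ ∑ i, Y i ω ^ 2} :=
        measure_mono <| Set.ofPred_subset_ofPred.2 fun ω hω => by
          rw [hdL, hdm, hLs] at hω; exact hω.le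
    _ ≤ ENNReal.ofReal (exp (-(s / (m + 2 * s)) * (m ^ 2 + 2 * (m * s) + 2 * s ^ 2)
          + cgf (fun ω => ∑ i, Y i ω ^ 2) P (s / (m + 2 * s)))) :=
        (ENNReal.le_ofReal_iff_toReal_le (measure_ne_top _ _) (exp_pos _).le).2
          (measure_ge_le_exp_cgf _ (by positivity) hint)
    _ ≤ ENNReal.ofReal (exp (-L)) := by
        gcongr
        rw [hcgf, hdm, hLs]
        exact chiSq_upper_exponent_le hm hs

lemma measure_sum_sq_lt_le (hmeas : ∀ i, Measurable (Y i)) (hindep : iIndepFun Y P)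
    (hgauss : ∀ i, P.map (Y i) = gaussianReal 0 1) {L : ℝ} (hL : 0 ≤ L) :
    P {ω | ∑ i, Y i ω ^ 2 < d - 2 * √(d * L)} ≤ ENNReal.ofReal (exp (-L)) := by
  have : IsProbabilityMeasure P := hindep.isProbabilityMeasure
  rcases Nat.eq_zero_or_pos d with rfl | hd
  · simp
  set m := √(d : ℝ)
  set s := √L
  have hm : 0 < m := sqrt_pos.2 (by exact_mod_cast hd)
  have hs : 0 ≤ s := sqrt_nonneg L
  have hdm : (d : ℝ) = m ^ 2 := (sq_sqrt (Nat.cast_nonneg d)).symm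
  have hLs : L = s ^ 2 := (sq_sqrt hL).symm
  have hdL : √(d * L) = m * s := sqrt_mul (Nat.cast_nonneg d) L
  have ht : -(s / m) < 1 / 2 := by linarith [div_nonneg hs hm.le]
  obtain ⟨hint, hcgf⟩ := cgf_sum_sq_of_gaussian hmeas hindep hgauss ht
  calc P {ω | ∑ i, Y i ω ^ 2 < d - 2 * √(d * L)}
      ≤ P {ω | ∑ i, Y i ω ^ 2 ≤ m ^ 2 - 2 * (m * s)} :=
        measure_mono <| Set.ofPred_subset_ofPred.2 fun ω hω => by
          rw [hdL, hdm] at hω; exact hω.le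
    _ ≤ ENNReal.ofReal (exp (-(-(s / m)) * (m ^ 2 - 2 * (m * s))
          + cgf (fun ω => ∑ i, Y i ω ^ 2) P (-(s / m)))) :=
        (ENNReal.le_ofReal_iff_toReal_le (measure_ne_top _ _) (exp_pos _).le).2
          (measure_le_le_exp_cgf _ (neg_nonpos.2 (by positivity)) hint)
    _ ≤ ENNReal.ofReal (exp (-L)) := by
        gcongr
        rw [hcgf, hdm, hLs]
        exact chiSq_lower_exponent_le hm hs

end

/-- Laurent–Massart chi-squared concentration: if
`X = ∑_{i<d} Y_i²` with `Y_i` i.i.d. standard Gaussians, then with probability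
at least `1 − 2δ`,
`−2√(d log(1/δ)) ≤ X − d ≤ 2√(d log(1/δ)) + 2 log(1/δ)`. -/
theorem chi_squared_concentration {Ω : Type*} [MeasurableSpace Ω]
    (P : Measure Ω) [IsProbabilityMeasure P] {d : ℕ}
    (Y : Fin d → Ω → ℝ) (hmeas : ∀ i, Measurable (Y i))
    (hindep : iIndepFun Y P)
    (hgauss : ∀ i, Measure.map (Y i) P = gaussianReal 0 1)
    {δ : ℝ} (hδ0 : 0 < δ) (hδ1 : δ < 1) :
    1 - ENNReal.ofReal (2 * δ) ≤
      P {ω | -(2 * Real.sqrt (d * Real.log (1 / δ))) ≤ (∑ i, (Y i ω) ^ 2) - d ∧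
        (∑ i, (Y i ω) ^ 2) - d ≤
          2 * Real.sqrt (d * Real.log (1 / δ)) + 2 * Real.log (1 / δ)} := by
  set L := log (1 / δ)
  have hL : 0 ≤ L := log_nonneg (by rw [le_div_iff₀ hδ0]; linarith)
  have hδ : exp (-L) = δ := by simp only [L, one_div, log_inv, neg_neg, exp_log hδ0]
  set A := {ω | -(2 * √(d * L)) ≤ (∑ i, Y i ω ^ 2) - d ∧
    (∑ i, Y i ω ^ 2) - d ≤ 2 * √(d * L) + 2 * L}
  have hAc : Aᶜ ⊆ {ω | ∑ i, Y i ω ^ 2 < d - 2 * √(d * L)} ∪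
      {ω | d + 2 * √(d * L) + 2 * L < ∑ i, Y i ω ^ 2} := by
    intro ω hω
    simp only [A, Set.mem_compl_iff, Set.mem_union, Set.mem_ofPred_eq, not_and_or, not_le]
      at hω ⊢
    rcases hω with h | h
    · exact Or.inl (by linarith)
    · exact Or.inr (by linarith)
  have hAc_le : P Aᶜ ≤ ENNReal.ofReal (2 * δ) := calc
    P Aᶜ ≤ ENNReal.ofReal (exp (-L)) + ENNReal.ofReal (exp (-L)) :=
      (measure_mono hAc).trans <| (measure_union_le _ _).trans <|
        add_le_add (measure_sum_sq_lt_le hmeas hindep hgauss hL)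
          (measure_sum_sq_gt_le hmeas hindep hgauss hL)
    _ = ENNReal.ofReal (2 * δ) := by rw [hδ, ← ENNReal.ofReal_add hδ0.le hδ0.le, two_mul]
  rw [tsub_le_iff_right]
  calc 1 = P (A ∪ Aᶜ) := by rw [Set.union_compl_self, measure_univ]
    _ ≤ P A + P Aᶜ := measure_union_le _ _
    _ ≤ P A + ENNReal.ofReal (2 * δ) := by gcongr
end
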